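/- arXiv:1307.0977 — 2 statements merged into one kernel-verified Lean document; each statement's English description precedes it below -/
import Mathlib

section
/- Let α ∈ {a,b}^{2m} (m ≥ 1) satisfy α_{2j} ≠ α_{2j+1} for all 1 ≤ j < m, and define k(α) = #{ j ≤ m : α_{2j-1} = α_{2j} = a } − #{ j ≤ m : α_{2j-1} = α_{2j} = b }. Then: k(α) = 1 if α_1 = α_{2m} = a; k(α) = −1 if α_1 = α_{2m} = b; and k(α) = 0 if α_1 ≠ α_{2m}. -/
/-- `k(α)`: for a sequence `α = (α_1, …, α_{2m})` with entries in `{a, b}`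
(`a = true`, `b = false`), the number of indices `1 ≤ j ≤ m` with
`α_{2j-1} = α_{2j} = a` minus the number with `α_{2j-1} = α_{2j} = b`. -/
def kval (m : ℕ) (α : ℕ → Bool) : ℤ :=
  (((Finset.Icc 1 m).filter fun j => α (2 * j - 1) = true ∧ α (2 * j) = true).card : ℤ) -
  (((Finset.Icc 1 m).filter fun j => α (2 * j - 1) = false ∧ α (2 * j) = false).card : ℤ)

/-!
Writing `[x]` for `1` if `x = a` and `0` if `x = b`, the `j`-th block contributes
`[α_{2j-1}] + [α_{2j}] - 1` to `k(α)`. The junction condition says `[α_{2j}] + [α_{2j+1}] = 1`,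
so the sum telescopes to `[α_1] + [α_{2m}] - 1`.
-/

lemma Bool.ite_and_sub_ite_not_and (x y : Bool) :
    ((if x = true ∧ y = true then 1 else 0) - (if x = false ∧ y = false then 1 else 0) : ℤ) =
      x.toNat + y.toNat - 1 := by
  cases x <;> cases y <;> rfl

lemma Bool.toNat_add_toNat_of_ne {x y : Bool} (h : x ≠ y) : (x.toNat + y.toNat : ℤ) = 1 := by
  cases x <;> cases y <;> simp_all

lemma kval_eq_sum (m : ℕ) (α : ℕ → Bool) :
    kval m α = ∑ j ∈ Finset.Icc 1 m, ((α (2 * j - 1)).toNat + (α (2 * j)).toNat - 1 : ℤ) := by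
  simp only [kval, Finset.card_filter, Nat.cast_sum, apply_ite (Nat.cast : ℕ → ℤ), Nat.cast_one,
    Nat.cast_zero, ← Finset.sum_sub_distrib, Bool.ite_and_sub_ite_not_and]

lemma kval_succ (m : ℕ) (α : ℕ → Bool) :
    kval (m + 1) α = kval m α + ((α (2 * m + 1)).toNat + (α (2 * m + 2)).toNat - 1) := by
  rw [kval_eq_sum, kval_eq_sum, Finset.sum_Icc_succ_top (by omega)]
  congr 3

lemma kval_eq_of_junction (m : ℕ) (hm : 1 ≤ m) (α : ℕ → Bool)
    (hjunction : ∀ j : ℕ, 1 ≤ j → j < m → α (2 * j) ≠ α (2 * j + 1)) :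
    kval m α = (α 1).toNat + (α (2 * m)).toNat - 1 := by
  induction m, hm using Nat.le_induction with
  | base => simp [kval_eq_sum]
  | succ n hn ih =>
    have hsum := Bool.toNat_add_toNat_of_ne (hjunction n hn n.lt_succ_self)
    rw [kval_succ, ih fun j hj hjn => hjunction j hj (by omega),
      show 2 * (n + 1) = 2 * n + 2 by ring]
    omega

/-- If `α ∈ {a,b}^{2m}` satisfies `α_{2j} ≠ α_{2j+1}` for all `1 ≤ j < m`, then
`k(α) = 1` if `α_1 = α_{2m} = a`, `k(α) = -1` if `α_1 = α_{2m} = b`, and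
`k(α) = 0` if `α_1 ≠ α_{2m}`. -/
theorem kval_boundary_values (m : ℕ) (hm : 1 ≤ m) (α : ℕ → Bool)
    (hjunction : ∀ j : ℕ, 1 ≤ j → j < m → α (2 * j) ≠ α (2 * j + 1)) :
    (α 1 = true → α (2 * m) = true → kval m α = 1) ∧
    (α 1 = false → α (2 * m) = false → kval m α = -1) ∧
    (α 1 ≠ α (2 * m) → kval m α = 0) := by
  rw [kval_eq_of_junction m hm α hjunction]
  cases α 1 <;> cases α (2 * m) <;> simp
end

section
/- Let D = { (i, i+j) : i ∈ ℤ[1/3], j ∈ ℤ } ⊆ ℚ² and let w = (-1, 1) ∈ D. Then the quotient D/⟨2w⟩ has torsion subgroup isomorphic to ℤ/2ℤ, generated by the class of w. -/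
/-- The subgroup `D = { (i, i + j) : i ∈ ℤ[1/3], j ∈ ℤ }` of `ℚ²`. -/
def Dsub : AddSubgroup (ℚ × ℚ) where
  carrier := {p | ∃ (z : ℤ) (n : ℕ) (j : ℤ), p.1 = (z : ℚ) / 3 ^ n ∧ p.2 = p.1 + j}
  zero_mem' := ⟨0, 0, 0, by norm_num, by norm_num⟩
  add_mem' := by
    rintro ⟨x1, x2⟩ ⟨y1, y2⟩ ⟨z1, n1, j1, h1, h2⟩ ⟨z2, n2, j2, k1, k2⟩
    refine ⟨z1 * 3 ^ n2 + z2 * 3 ^ n1, n1 + n2, j1 + j2, ?_, ?_⟩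
    · simp only [Prod.fst_add] at *
      push_cast
      rw [h1, k1]
      rw [div_add_div _ _ (by positivity) (by positivity)]
      push_cast
      ring_nf
    · simp only [Prod.fst_add, Prod.snd_add] at *
      rw [h2, k2]
      push_cast
      ring
  neg_mem' := by
    rintro ⟨x1, x2⟩ ⟨z, n, j, h1, h2⟩
    refine ⟨-z, n, -j, ?_, ?_⟩
    · simp only [Prod.fst_neg] at *
      rw [h1]; push_cast; ring
    · simp only [Prod.fst_neg, Prod.snd_neg] at *
      rw [h2]; push_cast; ring

/-- The element `w = (-1, 1)` of `D` (with `i = -1 ∈ ℤ[1/3]`, `j = 2`). -/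
def wD : Dsub := ⟨((-1 : ℚ), (1 : ℚ)), ⟨-1, 0, 2, by norm_num, by norm_num⟩⟩

/-!
A torsion class `[d]` has `n • d ∈ ⟨2w⟩` for some `n ≠ 0`, so `d` lies on the line `ℚ w`, i.e.
`d = (i, -i)` with `i = z / 3 ^ m` and `2 i = -j ∈ ℤ`. Since `2` and `3 ^ m` are coprime, `i` is an
integer, so `d ∈ ℤ w`, and modulo `2w` every integer multiple of `w` is `0` or `w`.
-/

theorem Rat.exists_int_eq_of_isCoprime {a b : ℤ} (hab : IsCoprime a b) {x : ℚ} {j k : ℤ}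
    (hj : a * x = j) (hk : b * x = k) : ∃ t : ℤ, x = t := by
  obtain ⟨u, v, huv⟩ := hab
  refine ⟨u * j + v * k, ?_⟩
  have huv' : (u : ℚ) * a + v * b = 1 := by exact_mod_cast huv
  push_cast
  rw [← hj, ← hk]
  linear_combination -x * huv'

namespace QuotientAddGroup

variable {G : Type*} [AddCommGroup G]

theorem two_zsmul_mk_eq_zero (g : G) :
    (2 : ℤ) • (mk g : G ⧸ AddSubgroup.zmultiples ((2 : ℤ) • g)) = 0 := by
  rw [← mk_zsmul, eq_zero_iff]
  exact AddSubgroup.mem_zmultiples _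

theorem mk_eq_zero_or_eq_mk_of_mem_zmultiples {g x : G} (hx : x ∈ AddSubgroup.zmultiples g) :
    (mk x : G ⧸ AddSubgroup.zmultiples ((2 : ℤ) • g)) = 0 ∨
      (mk x : G ⧸ AddSubgroup.zmultiples ((2 : ℤ) • g)) = mk g := by
  obtain ⟨t, rfl⟩ := AddSubgroup.mem_zmultiples_iff.mp hx
  rcases Int.even_or_odd' t with ⟨s, rfl | rfl⟩
  · left
    rw [eq_zero_iff, AddSubgroup.mem_zmultiples_iff]
    exact ⟨s, by rw [smul_smul, mul_comm]⟩
  · right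
    rw [eq_iff_sub_mem, AddSubgroup.mem_zmultiples_iff]
    exact ⟨s, by rw [smul_smul, add_zsmul, one_zsmul, add_sub_cancel_right, mul_comm]⟩

end QuotientAddGroup

open QuotientAddGroup

theorem coe_zsmul_wD (a : ℤ) : ((a • wD : Dsub) : ℚ × ℚ) = (-(a : ℚ), (a : ℚ)) := by
  rw [AddSubgroup.coe_zsmul]
  show a • ((-1 : ℚ), (1 : ℚ)) = _
  simp

theorem wD_notMem_zmultiples_two_zsmul : wD ∉ AddSubgroup.zmultiples ((2 : ℤ) • wD) := by
  intro hmem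
  obtain ⟨k, hk⟩ := AddSubgroup.mem_zmultiples_iff.mp hmem
  rw [smul_smul] at hk
  have h := congrArg (fun d : Dsub => (d : ℚ × ℚ).2) hk
  rw [coe_zsmul_wD] at h
  have h' : ((k * 2 : ℤ) : ℚ) = 1 := h
  have : k * 2 = 1 := by exact_mod_cast h'
  omega

theorem fst_add_snd_eq_zero_of_zsmul_mem {d : Dsub} {n : ℤ} (hn : n ≠ 0)
    (h : n • d ∈ AddSubgroup.zmultiples ((2 : ℤ) • wD)) :
    (d : ℚ × ℚ).1 + (d : ℚ × ℚ).2 = 0 := by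
  obtain ⟨k, hk⟩ := AddSubgroup.mem_zmultiples_iff.mp h
  rw [smul_smul] at hk
  have hq := congrArg Subtype.val hk
  rw [coe_zsmul_wD, AddSubgroup.coe_zsmul, Prod.ext_iff] at hq
  obtain ⟨h1, h2⟩ := hq
  simp only [Prod.smul_fst, Prod.smul_snd] at h1 h2
  have hsum : n • ((d : ℚ × ℚ).1 + (d : ℚ × ℚ).2) = 0 := by
    rw [smul_add, ← h1, ← h2]; ring
  exact (smul_eq_zero.mp hsum).resolve_left hn

theorem mem_zmultiples_wD_of_fst_add_snd_eq_zero {d : Dsub}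
    (h : (d : ℚ × ℚ).1 + (d : ℚ × ℚ).2 = 0) : d ∈ AddSubgroup.zmultiples wD := by
  obtain ⟨z, m, j, hd1, hd2⟩ := d.2
  have hcop : IsCoprime (2 : ℤ) (3 ^ m) := IsCoprime.pow_right (by norm_num)
  obtain ⟨t, ht⟩ := Rat.exists_int_eq_of_isCoprime hcop (x := (d : ℚ × ℚ).1) (j := -j) (k := z)
    (by push_cast; linarith) (by rw [hd1]; push_cast; field_simp)
  refine AddSubgroup.mem_zmultiples_iff.mpr ⟨-t, Subtype.ext ?_⟩
  rw [coe_zsmul_wD]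
  ext <;> push_cast <;> linarith

/-- With `D = { (i, i+j) : i ∈ ℤ[1/3], j ∈ ℤ }` and `w = (-1,1)`, the quotient
`D/⟨2w⟩` has torsion subgroup isomorphic to `ℤ/2ℤ`, generated by the class of
`w`: the class of `w` is a nonzero element of order two, and every torsion
element of the quotient is `0` or the class of `w`. -/
theorem torsion_of_quotient_by_two_w :
    ((QuotientAddGroup.mk wD : Dsub ⧸ AddSubgroup.zmultiples ((2 : ℤ) • wD)) ≠ 0) ∧
    (2 : ℤ) • (QuotientAddGroup.mk wD : Dsub ⧸ AddSubgroup.zmultiples ((2 : ℤ) • wD)) = 0 ∧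
    ∀ x : Dsub ⧸ AddSubgroup.zmultiples ((2 : ℤ) • wD),
      (∃ n : ℤ, n ≠ 0 ∧ n • x = 0) →
      x = 0 ∨ x = QuotientAddGroup.mk wD := by
  refine ⟨fun h => wD_notMem_zmultiples_two_zsmul ((eq_zero_iff _).mp h),
    two_zsmul_mk_eq_zero wD, ?_⟩
  rintro x ⟨n, hn, hnx⟩
  obtain ⟨d, rfl⟩ := mk_surjective x
  rw [← mk_zsmul, eq_zero_iff] at hnx
  exact mk_eq_zero_or_eq_mk_of_mem_zmultiples
    (mem_zmultiples_wD_of_fst_add_snd_eq_zero (fst_add_snd_eq_zero_of_zsmul_mem hn hnx))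
end
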